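/- arXiv:2407.14622 — 6 statements merged into one kernel-verified Lean document; each statement's English description precedes it below -/
import Mathlib

section
/- Let Y be a finite type, π_ref a probability mass function on Y, r : Y → ℝ injective, and N ≥ 1. For every y ∈ Y with π_ref(y) > 0, the Best-of-N probability satisfies π_BoN(y) = π_ref(y) · p_≤(y)^(N−1) · Σ_{i=1}^{N} (p_<(y)/p_≤(y))^(i−1). -/
open scoped Classical

/-- `pLt pref r y` is the probability under `pref` that a sample has strictly smaller reward. -/
noncomputable def pLt {Y : Type*} [Fintype Y] (pref : Y → ℝ) (r : Y → ℝ) (y : Y) : ℝ :=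
  ∑ y' ∈ Finset.univ.filter (fun y' => r y' < r y), pref y'

/-- `pLe pref r y` is the probability under `pref` that a sample has reward not larger. -/
noncomputable def pLe {Y : Type*} [Fintype Y] (pref : Y → ℝ) (r : Y → ℝ) (y : Y) : ℝ :=
  ∑ y' ∈ Finset.univ.filter (fun y' => r y' ≤ r y), pref y'

/-- The Best-of-N selection of the tuple `t` is `y`: the smallest index `i` among the
argmax indices of `r ∘ t` satisfies `t i = y`. -/
def IsBoNSelection {Y : Type*} (r : Y → ℝ) {N : ℕ} (t : Fin N → Y) (y : Y) : Prop :=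
  ∃ i : Fin N, (∀ j, r (t j) ≤ r (t i)) ∧
    (∀ i' : Fin N, (∀ j, r (t j) ≤ r (t i')) → i ≤ i') ∧ t i = y

/-- The Best-of-N distribution: probability that sampling `N` i.i.d. points from `pref`
and selecting the best one yields `y`. -/
noncomputable def piBoN {Y : Type*} [Fintype Y] (pref : Y → ℝ) (r : Y → ℝ) (N : ℕ) (y : Y) : ℝ :=
  ∑ t : Fin N → Y, if IsBoNSelection r t y then ∏ j, pref (t j) else 0

lemma pow_eq_sum_tuples {Y : Type*} [Fintype Y] (pref : Y → ℝ) (S : Finset Y) (N : ℕ) :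
    (∑ y' ∈ S, pref y') ^ N
      = ∑ t : Fin N → Y, if (∀ j, t j ∈ S) then ∏ j, pref (t j) else 0 := by
  classical
  have h1 : (∑ y' ∈ S, pref y') ^ N = ∏ _j : Fin N, ∑ y' ∈ S, pref y' := by
    simp
  rw [h1, Finset.prod_univ_sum]
  have h2 : Fintype.piFinset (fun _ : Fin N => S)
      = Finset.univ.filter (fun t : Fin N → Y => ∀ j, t j ∈ S) := by
    ext t; simp [Fintype.mem_piFinset]
  rw [h2, Finset.sum_filter]

/-- **Theorem 1 (BOND paper)**: analytic form of the Best-of-N distribution, in the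
factorized form `π_BoN(y) = π_ref(y) · p_≤(y)^(N−1) · Σ_{i=1}^N (p_<(y)/p_≤(y))^(i−1)`. -/
theorem bon_distribution_factored {Y : Type*} [Fintype Y]
    (pref : Y → ℝ) (hnonneg : ∀ y, 0 ≤ pref y) (hsum : ∑ y, pref y = 1)
    (r : Y → ℝ) (hr : Function.Injective r)
    (N : ℕ) (hN : 1 ≤ N) (y : Y) (hy : 0 < pref y) :
    piBoN pref r N y =
      pref y * (pLe pref r y) ^ (N - 1) *
        ∑ i ∈ Finset.range N, (pLt pref r y / pLe pref r y) ^ i := by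
  classical
  set a := pLt pref r y with ha
  set b := pLe pref r y with hb
  have hab : b = a + pref y := by
    rw [hb, ha, pLe, pLt]
    have hins : Finset.univ.filter (fun y' => r y' ≤ r y)
        = insert y (Finset.univ.filter (fun y' => r y' < r y)) := by
      ext z
      simp only [Finset.mem_insert, Finset.mem_filter, Finset.mem_univ, true_and]
      constructor
      · intro h
        rcases lt_or_eq_of_le h with h | h
        · exact Or.inr h
        · exact Or.inl (hr h)
      · rintro (rfl | h)
        · exact le_refl _
        · exact le_of_lt h
    rw [hins, Finset.sum_insert (by simp)]
    ring
  have ha0 : 0 ≤ a := Finset.sum_nonneg fun _ _ => hnonneg _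
  have hb0 : 0 < b := by rw [hab]; linarith
  -- characterization of BoN selection using injectivity of r
  have hsel : ∀ t : Fin N → Y,
      IsBoNSelection r t y ↔ ((∀ j, r (t j) ≤ r y) ∧ ∃ i, t i = y) := by
    intro t
    constructor
    · rintro ⟨i, hmax, -, rfl⟩
      exact ⟨hmax, i, rfl⟩
    · rintro ⟨hle, i, hi⟩
      set S := Finset.univ.filter (fun i' : Fin N => ∀ j, r (t j) ≤ r (t i')) with hS
      have hmaxi : ∀ j, r (t j) ≤ r (t i) := by rw [hi]; exact hle
      have hSne : S.Nonempty := ⟨i, by simp [hS, hmaxi]⟩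
      have hmem := S.min'_mem hSne
      simp only [hS, Finset.mem_filter, Finset.mem_univ, true_and] at hmem
      refine ⟨S.min' hSne, hmem, ?_, ?_⟩
      · intro i' hi'
        exact S.min'_le i' (by simp [hS, hi'])
      · apply hr
        apply le_antisymm (hle _)
        rw [← hi]
        exact hmem i
  -- key identity: piBoN = b^N - a^N
  have key : piBoN pref r N y = b ^ N - a ^ N := by
    have hle' : b ^ N
        = ∑ t : Fin N → Y, if (∀ j, r (t j) ≤ r y) then ∏ j, pref (t j) else 0 := by
      rw [hb, pLe, pow_eq_sum_tuples]
      refine Finset.sum_congr rfl fun t _ => ?_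
      simp [Finset.mem_filter]
    have hlt' : a ^ N
        = ∑ t : Fin N → Y, if (∀ j, r (t j) < r y) then ∏ j, pref (t j) else 0 := by
      rw [ha, pLt, pow_eq_sum_tuples]
      refine Finset.sum_congr rfl fun t _ => ?_
      simp [Finset.mem_filter]
    rw [hle', hlt', ← Finset.sum_sub_distrib, piBoN]
    refine Finset.sum_congr rfl fun t _ => ?_
    rw [hsel t]
    by_cases h1 : ∀ j, r (t j) ≤ r y
    · by_cases h2 : ∃ i, t i = y
      · have h3 : ¬ ∀ j, r (t j) < r y := by
          obtain ⟨i, hi⟩ := h2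
          intro h
          exact absurd (h i) (by rw [hi]; exact lt_irrefl _)
        simp [h1, h2, h3]
      · have h3 : ∀ j, r (t j) < r y := fun j =>
          lt_of_le_of_ne (h1 j) (fun he => h2 ⟨j, hr he⟩)
        simp [h1, h2, h3]
    · have h3 : ¬ ∀ j, r (t j) < r y := fun h => h1 fun j => le_of_lt (h j)
      simp [h1, h3]
  rw [key]
  -- algebraic identity
  have hbne : b ≠ 0 := ne_of_gt hb0
  have hsum' : b ^ (N - 1) * ∑ i ∈ Finset.range N, (a / b) ^ i
      = ∑ i ∈ Finset.range N, a ^ i * b ^ (N - 1 - i) := by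
    rw [Finset.mul_sum]
    refine Finset.sum_congr rfl fun i hi => ?_
    rw [Finset.mem_range] at hi
    have hbpow : b ^ (N - 1) = b ^ i * b ^ (N - 1 - i) := by
      rw [← pow_add]; congr 1; omega
    rw [div_pow, hbpow]
    field_simp
  have hpy : pref y = b - a := by rw [hab]; ring
  rw [hpy, mul_assoc, hsum']
  have hg := geom_sum₂_mul a b N
  linear_combination hg
end

section
/- Let Y be a finite type, π_ref a probability mass function on Y, r : Y → ℝ injective, and N ≥ 1. For every y ∈ Y, π_BoN(y) ≤ N · π_ref(y) · p_≤(y)^(N−1); in particular π_BoN(y) ≤ N · π_ref(y). -/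
open scoped Classical

/-- The Best-of-N probability is at most `N · π_ref(y) · p_≤(y)^(N−1)`, and in particular
at most `N · π_ref(y)`. -/
theorem bon_upper_bound {Y : Type*} [Fintype Y]
    (pref : Y → ℝ) (hnonneg : ∀ y, 0 ≤ pref y) (hsum : ∑ y, pref y = 1)
    (r : Y → ℝ) (hr : Function.Injective r)
    (N : ℕ) (hN : 1 ≤ N) (y : Y) :
    piBoN pref r N y ≤ (N : ℝ) * pref y * (pLe pref r y) ^ (N - 1) ∧
      piBoN pref r N y ≤ (N : ℝ) * pref y := by
  have hple_nonneg : 0 ≤ pLe pref r y := Finset.sum_nonneg fun _ _ => hnonneg _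
  have hple_le : pLe pref r y ≤ 1 := by
    rw [← hsum]
    exact Finset.sum_le_sum_of_subset_of_nonneg (Finset.filter_subset _ _)
      (fun i _ _ => hnonneg i)
  set g : Fin N → Fin N → Y → ℝ := fun i j y' =>
    if j = i then (if y' = y then pref y' else 0)
    else (if r y' ≤ r y then pref y' else 0) with hg
  have hgnn : ∀ i j y', 0 ≤ g i j y' := by
    intro i j y'
    rw [hg]
    dsimp only
    split_ifs <;> simp [hnonneg]
  have h1 : piBoN pref r N y ≤ ∑ i : Fin N, ∑ t : Fin N → Y, ∏ j, g i j (t j) := by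
    rw [Finset.sum_comm]
    unfold piBoN
    apply Finset.sum_le_sum
    intro t _
    by_cases h : IsBoNSelection r t y
    · simp only [h, if_true]
      obtain ⟨i, hmax, _, hti⟩ := h
      have heq : ∏ j, pref (t j) = ∏ j, g i j (t j) := by
        apply Finset.prod_congr rfl
        intro j _
        by_cases hj : j = i
        · subst hj; simp [hg, hti]
        · have hle : r (t j) ≤ r y := hti ▸ hmax j
          simp [hg, hj, hle]
      rw [heq]
      exact Finset.single_le_sum (f := fun k => ∏ j, g k j (t j))
        (fun k _ => Finset.prod_nonneg fun j _ => hgnn k j (t j)) (Finset.mem_univ i)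
    · simp only [h, if_false]
      exact Finset.sum_nonneg fun k _ => Finset.prod_nonneg fun j _ => hgnn k j (t j)
  have h2 : ∀ i : Fin N, ∑ t : Fin N → Y, ∏ j, g i j (t j)
      = pref y * (pLe pref r y) ^ (N - 1) := by
    intro i
    have hp := Finset.prod_univ_sum (fun _ : Fin N => (Finset.univ : Finset Y))
      (fun j y' => g i j y')
    rw [Fintype.piFinset_univ] at hp
    rw [← hp]
    have hsi : ∀ j : Fin N, (∑ y', g i j y')
        = if j = i then pref y else pLe pref r y := by
      intro j
      by_cases hj : j = i
      · simp [hg, hj]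
      · simp [hg, hj, pLe, Finset.sum_filter]
    calc ∏ j, ∑ y', g i j y'
        = ∏ j : Fin N, (if j = i then pref y else pLe pref r y) :=
          Finset.prod_congr rfl fun j _ => hsi j
      _ = pref y * (pLe pref r y) ^ (N - 1) := by
          rw [← Finset.mul_prod_erase Finset.univ _ (Finset.mem_univ i)]
          rw [if_pos rfl]
          congr 1
          rw [Finset.prod_congr rfl (fun j hj => if_neg (Finset.ne_of_mem_erase hj)),
            Finset.prod_const, Finset.card_erase_of_mem (Finset.mem_univ i),
            Finset.card_univ, Fintype.card_fin]
  have h3 : piBoN pref r N y ≤ (N : ℝ) * pref y * (pLe pref r y) ^ (N - 1) := by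
    calc piBoN pref r N y ≤ ∑ i : Fin N, ∑ t : Fin N → Y, ∏ j, g i j (t j) := h1
      _ = ∑ _i : Fin N, pref y * (pLe pref r y) ^ (N - 1) :=
          Finset.sum_congr rfl fun i _ => h2 i
      _ = (N : ℝ) * pref y * (pLe pref r y) ^ (N - 1) := by
          rw [Finset.sum_const, Finset.card_univ, Fintype.card_fin, nsmul_eq_mul, mul_assoc]
  refine ⟨h3, h3.trans ?_⟩
  calc (N : ℝ) * pref y * (pLe pref r y) ^ (N - 1)
      ≤ (N : ℝ) * pref y * 1 := by
        apply mul_le_mul_of_nonneg_left (pow_le_one₀ hple_nonneg hple_le)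
        exact mul_nonneg (Nat.cast_nonneg N) (hnonneg y)
    _ = (N : ℝ) * pref y := mul_one _
end

section
/- Let Y be a finite type, π_ref a probability mass function on Y, r : Y → ℝ injective, and N ≥ 1. Then Σ_{y ∈ Y} π_ref(y) · Σ_{i=1}^{N} p_<(y)^(i−1) · p_≤(y)^(N−i) = 1; that is, the Best-of-N formula defines a probability mass function on Y. -/
open scoped Classical

/-- The Best-of-N formula defines a probability mass function:
`Σ_y π_ref(y) · Σ_{i=1}^N p_<(y)^(i−1) p_≤(y)^(N−i) = 1`. -/
theorem bon_formula_sums_to_one {Y : Type*} [Fintype Y]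
    (pref : Y → ℝ) (hnonneg : ∀ y, 0 ≤ pref y) (hsum : ∑ y, pref y = 1)
    (r : Y → ℝ) (hr : Function.Injective r)
    (N : ℕ) (hN : 1 ≤ N) :
    ∑ y, pref y * ∑ i ∈ Finset.range N, (pLt pref r y) ^ i * (pLe pref r y) ^ (N - 1 - i)
      = 1 := by
  classical
  have hsplit : ∀ y, pLe pref r y = pLt pref r y + pref y := by
    intro y
    unfold pLe pLt
    have : Finset.univ.filter (fun y' => r y' ≤ r y)
        = insert y (Finset.univ.filter (fun y' => r y' < r y)) := by
      ext z
      simp only [Finset.mem_filter, Finset.mem_univ, true_and, Finset.mem_insert]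
      constructor
      · intro h
        rcases lt_or_eq_of_le h with h | h
        · exact Or.inr h
        · exact Or.inl (hr h)
      · rintro (rfl | h)
        · exact le_rfl
        · exact h.le
    rw [this, Finset.sum_insert (by simp)]
    ring
  have hterm : ∀ y, pref y * ∑ i ∈ Finset.range N,
      (pLt pref r y) ^ i * (pLe pref r y) ^ (N - 1 - i)
      = (pLe pref r y) ^ N - (pLt pref r y) ^ N := by
    intro y
    have h := geom_sum₂_mul (pLt pref r y) (pLe pref r y) N
    have hp : pLt pref r y - pLe pref r y = -(pref y) := by rw [hsplit y]; ring
    rw [hp] at h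
    linarith [h]
  simp only [hterm]
  letI : LinearOrder Y := LinearOrder.lift' r hr
  set n := Fintype.card Y with hn
  let e := monoEquivOfFin Y hn.symm
  have hmono : ∀ a b : Fin n, r (e a) < r (e b) ↔ a < b := fun a b => e.lt_iff_lt
  have hmono' : ∀ a b : Fin n, r (e a) ≤ r (e b) ↔ a ≤ b := fun a b => e.le_iff_le
  set B : ℕ → ℝ := fun m => ∑ j ∈ Finset.univ.filter (fun j : Fin n => (j : ℕ) < m), pref (e j)
    with hB
  have hlt : ∀ k : Fin n, pLt pref r (e k) = B (k : ℕ) := by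
    intro k
    unfold pLt
    rw [Finset.sum_filter, ← e.toEquiv.sum_comp
      (fun y' => if r y' < r (e k) then pref y' else 0)]
    simp only [hB, Finset.sum_filter, RelIso.coe_fn_toEquiv]
    refine Finset.sum_congr rfl fun j _ => ?_
    exact if_congr (by rw [hmono j k, Fin.lt_iff_val_lt_val]) rfl rfl
  have hle : ∀ k : Fin n, pLe pref r (e k) = B ((k : ℕ) + 1) := by
    intro k
    unfold pLe
    rw [Finset.sum_filter, ← e.toEquiv.sum_comp
      (fun y' => if r y' ≤ r (e k) then pref y' else 0)]
    simp only [hB, Finset.sum_filter, RelIso.coe_fn_toEquiv]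
    refine Finset.sum_congr rfl fun j _ => ?_
    exact if_congr (by rw [hmono' j k, Fin.le_iff_val_le_val, Nat.lt_succ_iff]) rfl rfl
  rw [← e.toEquiv.sum_comp (fun y => (pLe pref r y) ^ N - (pLt pref r y) ^ N)]
  simp only [RelIso.coe_fn_toEquiv, hlt, hle]
  rw [Fin.sum_univ_eq_sum_range (fun k => B (k + 1) ^ N - B k ^ N) n,
    Finset.sum_range_sub (fun m => B m ^ N) n]
  have hB0 : B 0 = 0 := by simp [hB]
  have hBn : B n = 1 := by
    simp only [hB]
    have : Finset.univ.filter (fun j : Fin n => (j : ℕ) < n) = Finset.univ := by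
      ext j; simp [j.isLt]
    rw [this, ← hsum, ← e.toEquiv.sum_comp pref]
    rfl
  rw [hB0, hBn, one_pow, zero_pow (by omega)]
  ring
end

section
/- Let Y be a finite type, π_ref a probability mass function on Y, r : Y → ℝ injective, and N ≥ 2. Define r_BOND(y) = log p_≤(y) + (1/(N−1)) · log Σ_{i=1}^{N} (p_<(y)/p_≤(y))^(i−1) for y with π_ref(y) > 0, and β_BOND = 1/(N−1). Then for every y with π_ref(y) > 0, π_BoN(y) = π_ref(y) · exp(r_BOND(y)/β_BOND); i.e., the Best-of-N distribution is exactly the exponential tilting of π_ref by reward r_BOND at regularization strength β_BOND. -/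
/-!
The Best-of-N output is `y` exactly when all `N` samples have reward at most `r y` but not all
have reward below `r y`, so `π_BoN(y) = p_≤(y)^N - p_<(y)^N`. Injectivity of `r` gives
`p_≤(y) = p_<(y) + π_ref(y)`, so factoring the difference of powers gives
`p_≤^N - p_<^N = π_ref(y) · p_≤^(N-1) · Σ_{i<N} (p_< / p_≤)^i`, and the last two factors are
exactly `exp(r_BOND(y) / β_BOND)`.
-/

open scoped Classical

open Finset

section BestOfN

variable {Y : Type*} {r : Y → ℝ}

theorem isBoNSelection_iff (hr : Function.Injective r) {N : ℕ} (t : Fin N → Y) (y : Y) :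
    IsBoNSelection r t y ↔ (∀ j, r (t j) ≤ r y) ∧ ∃ i, t i = y := by
  constructor
  · rintro ⟨i, hmax, -, rfl⟩
    exact ⟨hmax, i, rfl⟩
  · rintro ⟨hle, i₀, hi₀⟩
    have hne : (univ.filter fun i => t i = y).Nonempty := ⟨i₀, by simp [hi₀]⟩
    have hiy : t ((univ.filter fun i => t i = y).min' hne) = y := by
      simpa using min'_mem _ hne
    refine ⟨_, by rwa [hiy], fun i' hi' => min'_le _ _ ?_, hiy⟩
    have hi'y : t i' = y := hr <| (hle i').antisymm (hiy ▸ hi' _)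
    simp [hi'y]

variable [Fintype Y]

theorem isBoNSelection_iff_mem_sdiff (hr : Function.Injective r) {N : ℕ} (t : Fin N → Y)
    (y : Y) :
    IsBoNSelection r t y ↔ t ∈ Fintype.piFinset (fun _ => univ.filter fun y' => r y' ≤ r y) \
      Fintype.piFinset (fun _ => univ.filter fun y' => r y' < r y) := by
  simp only [isBoNSelection_iff hr, mem_sdiff, Fintype.mem_piFinset, mem_filter, mem_univ,
    true_and, not_forall, not_lt]
  refine and_congr_right fun hle => exists_congr fun j => ?_
  exact ⟨fun h => h ▸ le_rfl, fun h => hr ((hle j).antisymm h)⟩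

variable (pref : Y → ℝ)

theorem piBoN_eq_pLe_pow_sub_pLt_pow (hr : Function.Injective r) (N : ℕ) (y : Y) :
    piBoN pref r N y = pLe pref r y ^ N - pLt pref r y ^ N := by
  have hsub : Fintype.piFinset (fun _ : Fin N => univ.filter fun y' => r y' < r y) ⊆
      Fintype.piFinset (fun _ => univ.filter fun y' => r y' ≤ r y) :=
    Fintype.piFinset_subset _ _ fun _ => monotone_filter_right _ fun _ _ => le_of_lt
  rw [piBoN, ← sum_filter, pLe, pLt, sum_pow', sum_pow', ← sum_sdiff_eq_sub hsub]
  congr 1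
  ext t
  simp [isBoNSelection_iff_mem_sdiff hr]

theorem pLe_eq_pLt_add (hr : Function.Injective r) (y : Y) :
    pLe pref r y = pLt pref r y + pref y := by
  have : univ.filter (fun y' => r y' ≤ r y) = insert y (univ.filter fun y' => r y' < r y) := by
    ext y'
    simp [le_iff_lt_or_eq, hr.eq_iff, or_comm]
  rw [pLe, pLt, this, sum_insert (by simp), add_comm]

end BestOfN

theorem pow_succ_sub_pow_succ_eq {K : Type*} [Field K] {a b : K} (hb : b ≠ 0) (n : ℕ) :
    b ^ (n + 1) - a ^ (n + 1) = (b - a) * b ^ n * ∑ i ∈ range (n + 1), (a / b) ^ i := by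
  calc b ^ (n + 1) - a ^ (n + 1) = b ^ (n + 1) * (1 - (a / b) ^ (n + 1)) := by
        rw [div_pow]; field_simp
    _ = (b - a) * b ^ n * ∑ i ∈ range (n + 1), (a / b) ^ i := by
        rw [← geom_sum_mul_neg]; field_simp; ring

theorem Real.exp_div_one_div_natCast {b S : ℝ} (hb : 0 < b) (hS : 0 < S) {n : ℕ} (hn : n ≠ 0) :
    Real.exp ((Real.log b + 1 / n * Real.log S) / (1 / n)) = b ^ n * S := by
  have : (Real.log b + 1 / n * Real.log S) / (1 / n) = n * Real.log b + Real.log S := by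
    field_simp
  rw [this, Real.exp_add, Real.exp_nat_mul, Real.exp_log hb, Real.exp_log hS]

theorem bon_is_exponential_tilting_general {Y : Type*} [Fintype Y]
    (pref : Y → ℝ) (hnonneg : ∀ y, 0 ≤ pref y)
    (r : Y → ℝ) (hr : Function.Injective r)
    (N : ℕ) (hN : 2 ≤ N)
    (rBOND : Y → ℝ)
    (hrBOND : ∀ y, 0 < pref y →
      rBOND y = Real.log (pLe pref r y) +
        (1 / ((N : ℝ) - 1)) *
          Real.log (∑ i ∈ Finset.range N, (pLt pref r y / pLe pref r y) ^ i))
    (βBOND : ℝ) (hβ : βBOND = 1 / ((N : ℝ) - 1)) :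
    ∀ y : Y, 0 < pref y →
      piBoN pref r N y = pref y * Real.exp (rBOND y / βBOND) := by
  intro y hy
  obtain ⟨n, rfl⟩ : ∃ n, N = n + 1 := ⟨N - 1, by omega⟩
  have hcast : ((n + 1 : ℕ) : ℝ) - 1 = n := by push_cast; ring
  have hLe := pLe_eq_pLt_add pref hr y
  have hLt_nonneg : 0 ≤ pLt pref r y := sum_nonneg fun y' _ => hnonneg y'
  have hLe_pos : 0 < pLe pref r y := by rw [hLe]; positivity
  have hgeom_pos : 0 < ∑ i ∈ range (n + 1), (pLt pref r y / pLe pref r y) ^ i :=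
    geom_sum_pos (by positivity) n.succ_ne_zero
  rw [piBoN_eq_pLe_pow_sub_pLt_pow pref hr, hrBOND y hy, hβ, hcast,
    Real.exp_div_one_div_natCast hLe_pos hgeom_pos (by omega),
    pow_succ_sub_pow_succ_eq hLe_pos.ne', hLe]
  ring

/-- Best-of-N sampling corresponds to the exponential tilting of `π_ref` by the BOND reward
`r_BOND(y) = log p_≤(y) + (1/(N−1)) log Σ_{i=1}^N (p_<(y)/p_≤(y))^(i−1)` at regularization
strength `β_BOND = 1/(N−1)`: for all `y` with `π_ref(y) > 0`,
`π_BoN(y) = π_ref(y) · exp(r_BOND(y)/β_BOND)`. -/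
theorem bon_is_exponential_tilting {Y : Type*} [Fintype Y]
    (pref : Y → ℝ) (hnonneg : ∀ y, 0 ≤ pref y) (hsum : ∑ y, pref y = 1)
    (r : Y → ℝ) (hr : Function.Injective r)
    (N : ℕ) (hN : 2 ≤ N)
    (rBOND : Y → ℝ)
    (hrBOND : ∀ y, 0 < pref y →
      rBOND y = Real.log (pLe pref r y) +
        (1 / ((N : ℝ) - 1)) *
          Real.log (∑ i ∈ Finset.range N, (pLt pref r y / pLe pref r y) ^ i))
    (βBOND : ℝ) (hβ : βBOND = 1 / ((N : ℝ) - 1)) :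
    ∀ y : Y, 0 < pref y →
      piBoN pref r N y = pref y * Real.exp (rBOND y / βBOND) :=
  bon_is_exponential_tilting_general pref hnonneg r hr N hN rBOND hrBOND βBOND hβ
end

section
/- Let Y be a finite type, π_ref a probability mass function on Y, r : Y → ℝ injective, and N ≥ 2. For every y ∈ Y with p_≤(y) > 0, the correction term of the BOND reward satisfies 0 ≤ (1/(N−1)) · log Σ_{i=1}^{N} (p_<(y)/p_≤(y))^(i−1) ≤ (log N)/(N−1). -/
open scoped Classical

/-- The correction term `(B)` of the BOND reward is bounded within `[0, (log N)/(N−1)]`. -/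
theorem bond_correction_term_bounds {Y : Type*} [Fintype Y]
    (pref : Y → ℝ) (hnonneg : ∀ y, 0 ≤ pref y) (hsum : ∑ y, pref y = 1)
    (r : Y → ℝ) (hr : Function.Injective r)
    (N : ℕ) (hN : 2 ≤ N) (y : Y) (hy : 0 < pLe pref r y) :
    0 ≤ (1 / ((N : ℝ) - 1)) *
        Real.log (∑ i ∈ Finset.range N, (pLt pref r y / pLe pref r y) ^ i) ∧
      (1 / ((N : ℝ) - 1)) *
        Real.log (∑ i ∈ Finset.range N, (pLt pref r y / pLe pref r y) ^ i)
        ≤ Real.log N / ((N : ℝ) - 1) := by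
  have hq0 : 0 ≤ pLt pref r y / pLe pref r y :=
    div_nonneg (Finset.sum_nonneg fun y' _ => hnonneg y') hy.le
  have hq1 : pLt pref r y / pLe pref r y ≤ 1 := by
    rw [div_le_one hy]
    refine Finset.sum_le_sum_of_subset_of_nonneg ?_ (fun y' _ _ => hnonneg y')
    intro y' h
    simp only [Finset.mem_filter, Finset.mem_univ, true_and] at h ⊢
    exact h.le
  set q := pLt pref r y / pLe pref r y with hqdef
  set S := ∑ i ∈ Finset.range N, q ^ i with hSdef
  have hS1 : 1 ≤ S := by
    have : (0:ℕ) ∈ Finset.range N := Finset.mem_range.mpr (by omega)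
    calc (1:ℝ) = q ^ 0 := by simp
    _ ≤ S := Finset.single_le_sum (f := fun i => q ^ i)
        (fun i _ => pow_nonneg hq0 i) this
  have hSN : S ≤ N := by
    calc S ≤ ∑ _i ∈ Finset.range N, (1:ℝ) :=
        Finset.sum_le_sum fun i _ => pow_le_one₀ hq0 hq1
    _ = N := by simp
  have hNpos : (0:ℝ) < N - 1 := by
    have : (2:ℝ) ≤ N := by exact_mod_cast hN
    linarith
  have hlog0 : 0 ≤ Real.log S := Real.log_nonneg hS1
  have hlogN : Real.log S ≤ Real.log N :=
    Real.log_le_log (by linarith) hSN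
  constructor
  · positivity
  · rw [div_eq_mul_inv (Real.log N), one_div, mul_comm (Real.log N)]
    exact mul_le_mul_of_nonneg_left hlogN (by positivity)
end

section
/- Let Y be a finite type, π_ref a probability mass function on Y, r : Y → ℝ injective, and a, b ≥ 1 natural numbers. Let π_Bob denote the Best-of-b distribution of π_ref. Then the Best-of-a distribution of π_Bob (with the same reward r) equals the Best-of-(a·b) distribution of π_ref; i.e., iterating Best-of-N sampling composes multiplicatively: Bo_a(Bo_b(π_ref)) = Bo_{ab}(π_ref) as probability mass functions on Y. -/
open scoped Classical

lemma isBoN_iff {Y : Type*} (r : Y → ℝ) (hr : Function.Injective r) {N : ℕ}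
    (t : Fin N → Y) (y : Y) :
    IsBoNSelection r t y ↔ ((∀ j, r (t j) ≤ r y) ∧ ∃ j, t j = y) := by
  constructor
  · rintro ⟨i, hmax, hleast, hti⟩
    exact ⟨fun j => hti ▸ hmax j, ⟨i, hti⟩⟩
  · rintro ⟨hle, j0, hj0⟩
    have hA : (Finset.univ.filter (fun j : Fin N => t j = y)).Nonempty :=
      ⟨j0, by simp [hj0]⟩
    set i := (Finset.univ.filter (fun j : Fin N => t j = y)).min' hA with hi
    have hiA : t i = y := by
      have := Finset.min'_mem _ hA
      simpa using this
    refine ⟨i, fun j => by rw [hiA]; exact hle j, ?_, hiA⟩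
    intro i' hi'
    have h1 : r (t i') ≤ r y := hle i'
    have h2 : r y ≤ r (t i') := by rw [← hj0]; exact hi' j0
    have : t i' = y := hr (le_antisymm h1 h2)
    exact Finset.min'_le _ _ (by simp [this])

lemma sum_all_mem {Y : Type*} [Fintype Y] (p : Y → ℝ) (Q : Y → Prop) (N : ℕ) :
    (∑ t : Fin N → Y, if ∀ j, Q (t j) then ∏ j, p (t j) else 0)
      = (∑ y' ∈ Finset.univ.filter Q, p y') ^ N := by
  rw [← Finset.sum_filter]
  have h : (Finset.univ.filter fun t : Fin N → Y => ∀ j, Q (t j))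
      = Fintype.piFinset (fun _ : Fin N => Finset.univ.filter Q) := by
    ext t; simp [Fintype.mem_piFinset]
  rw [h, ← Finset.prod_univ_sum]
  simp

lemma bon_eq {Y : Type*} [Fintype Y] (p : Y → ℝ) (r : Y → ℝ) (hr : Function.Injective r)
    (N : ℕ) (y : Y) :
    piBoN p r N y = (pLe p r y) ^ N - (pLt p r y) ^ N := by
  unfold piBoN
  have h1 : ∀ t : Fin N → Y, (if IsBoNSelection r t y then ∏ j, p (t j) else 0)
      = (if ∀ j, r (t j) ≤ r y then ∏ j, p (t j) else 0)
        - (if ∀ j, r (t j) < r y then ∏ j, p (t j) else 0) := by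
    intro t
    by_cases hle : ∀ j, r (t j) ≤ r y
    · by_cases hlt : ∀ j, r (t j) < r y
      · have hnot : ¬ IsBoNSelection r t y := by
          rw [isBoN_iff r hr]
          rintro ⟨-, j, hj⟩
          exact absurd (hj ▸ hlt j) (lt_irrefl _)
        rw [if_neg hnot, if_pos hle, if_pos hlt]; ring
      · have hyes : IsBoNSelection r t y := by
          rw [isBoN_iff r hr]
          push_neg at hlt
          obtain ⟨j, hj⟩ := hlt
          exact ⟨hle, j, hr (le_antisymm (hle j) hj)⟩
        rw [if_pos hyes, if_pos hle, if_neg hlt]; ring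
    · have hnot : ¬ IsBoNSelection r t y := by
        rw [isBoN_iff r hr]; rintro ⟨h, -⟩; exact hle h
      have hnlt : ¬ ∀ j, r (t j) < r y := fun h => hle fun j => (h j).le
      rw [if_neg hnot, if_neg hle, if_neg hnlt]; ring
  rw [Finset.sum_congr rfl (fun t _ => h1 t), Finset.sum_sub_distrib,
    sum_all_mem p (fun y' => r y' ≤ r y) N, sum_all_mem p (fun y' => r y' < r y) N]
  rfl

lemma tele {Y : Type*} [Fintype Y] (p : Y → ℝ) (r : Y → ℝ) (hr : Function.Injective r)
    (N : ℕ) (hN : 1 ≤ N) :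
    ∀ S : Finset Y, (∀ y ∈ S, ∀ y', r y' < r y → y' ∈ S) →
      ∑ y ∈ S, ((pLe p r y) ^ N - (pLt p r y) ^ N) = (∑ y ∈ S, p y) ^ N := by
  intro S
  induction S using Finset.strongInduction with
  | _ S ih =>
    intro hdc
    rcases S.eq_empty_or_nonempty with rfl | hne
    · simp [zero_pow (by omega : N ≠ 0)]
    · obtain ⟨m, hmS, hmax⟩ := S.exists_max_image r hne
      have hSle : Finset.univ.filter (fun y' => r y' ≤ r m) = S := by
        ext y'
        simp only [Finset.mem_filter, Finset.mem_univ, true_and]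
        constructor
        · intro h
          rcases lt_or_eq_of_le h with h | h
          · exact hdc m hmS y' h
          · exact (hr h) ▸ hmS
        · exact fun h => hmax y' h
      have hSlt : Finset.univ.filter (fun y' => r y' < r m) = S.erase m := by
        ext y'
        simp only [Finset.mem_filter, Finset.mem_univ, true_and, Finset.mem_erase]
        constructor
        · intro h
          exact ⟨fun he => absurd (he ▸ h) (lt_irrefl _), hdc m hmS y' h⟩
        · rintro ⟨hne', hmem⟩
          exact lt_of_le_of_ne (hmax y' hmem) (fun he => hne' (hr he))
      have hErase : S.erase m ⊂ S := Finset.erase_ssubset hmS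
      have hdc' : ∀ y ∈ S.erase m, ∀ y', r y' < r y → y' ∈ S.erase m := by
        intro y hy y' hy'
        rw [Finset.mem_erase] at hy ⊢
        refine ⟨?_, hdc y hy.2 y' hy'⟩
        intro he
        exact absurd (lt_of_lt_of_le (he ▸ hy') (hmax y hy.2)) (lt_irrefl _)
      have hIH := ih (S.erase m) hErase hdc'
      rw [← Finset.add_sum_erase _ _ hmS, ← Finset.add_sum_erase _ _ hmS, hIH]
      have e1 : pLe p r m = ∑ y ∈ S, p y := by rw [pLe, hSle]
      have e2 : pLt p r m = ∑ y ∈ S.erase m, p y := by rw [pLt, hSlt]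
      rw [e1, e2, ← Finset.add_sum_erase _ _ hmS]
      ring

/-- Iterated Best-of-N composes multiplicatively: the Best-of-`a` distribution of the
Best-of-`b` distribution of `π_ref` equals the Best-of-`(a·b)` distribution of `π_ref`. -/
theorem bon_compose {Y : Type*} [Fintype Y]
    (pref : Y → ℝ) (hnonneg : ∀ y, 0 ≤ pref y) (hsum : ∑ y, pref y = 1)
    (r : Y → ℝ) (hr : Function.Injective r)
    (a b : ℕ) (ha : 1 ≤ a) (hb : 1 ≤ b) :
    ∀ y : Y, piBoN (fun y' => piBoN pref r b y') r a y = piBoN pref r (a * b) y := by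
  intro y
  have hLe : pLe (fun y' => piBoN pref r b y') r y = (pLe pref r y) ^ b := by
    rw [pLe]
    rw [Finset.sum_congr rfl (fun y' _ => bon_eq pref r hr b y')]
    rw [tele pref r hr b hb _ (by
      intro z hz z' hz'
      simp only [Finset.mem_filter, Finset.mem_univ, true_and] at hz ⊢
      exact le_of_lt (lt_of_lt_of_le hz' hz))]
    rfl
  have hLt : pLt (fun y' => piBoN pref r b y') r y = (pLt pref r y) ^ b := by
    rw [pLt]
    rw [Finset.sum_congr rfl (fun y' _ => bon_eq pref r hr b y')]
    rw [tele pref r hr b hb _ (by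
      intro z hz z' hz'
      simp only [Finset.mem_filter, Finset.mem_univ, true_and] at hz ⊢
      exact lt_trans hz' hz)]
    rfl
  rw [bon_eq _ r hr a y, bon_eq pref r hr (a * b) y, hLe, hLt,
    ← pow_mul, ← pow_mul, mul_comm b a]
end
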